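/- arXiv:2001.04887 — 4 statements merged into one kernel-verified Lean document; each statement's English description precedes it below -/
import Mathlib

section
/- For every n ≥ 1 and all a, b ∈ F_2^n, conjugation of the Hermitian Pauli matrix E(a,b) by the transversal T gate satisfies T^{⊗n} E(a,b) (T^{⊗n})† = 2^{−w_H(a)/2} · Σ_{y ⪯ a} (−1)^{b y^T} E(a, b ⊕ y), where the sum runs over all y ∈ F_2^n with supp(y) ⊆ supp(a) and ⊕ denotes addition in F_2^n. -/
open Matrix BigOperators

section Binary

variable {ι : Type*} [Fintype ι] [DecidableEq ι]

/-- Hamming weight of a binary vector. -/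
def wH (x : ι → ZMod 2) : ℕ := (Finset.univ.filter fun j => x j = 1).card

/-- `supportLE y x` means `supp(y) ⊆ supp(x)`, i.e. `y ⪯ x`. -/
def supportLE (y x : ι → ZMod 2) : Prop := ∀ j, y j = 1 → x j = 1

instance (x : ι → ZMod 2) : DecidablePred (fun y : ι → ZMod 2 => supportLE y x) :=
  fun _ => inferInstanceAs (Decidable (∀ j, _ = 1 → x j = 1))

/-- The mod-2 inner product `x yᵀ = ∑ j, x j * y j`. -/
def binInner (x y : ι → ZMod 2) : ZMod 2 := ∑ j, x j * y j

/-- The dual code `C^⊥ = {y : x yᵀ = 0 for all x ∈ C}`. -/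
def dualCode (C : Submodule (ZMod 2) (ι → ZMod 2)) : Submodule (ZMod 2) (ι → ZMod 2) where
  carrier := { y | ∀ x ∈ C, binInner x y = 0 }
  add_mem' := by
    intro a b ha hb x hx
    have h : binInner x (a + b) = binInner x a + binInner x b := by
      simp [binInner, mul_add, Finset.sum_add_distrib]
    rw [h, ha x hx, hb x hx, add_zero]
  zero_mem' := by
    intro x hx
    simp [binInner]
  smul_mem' := by
    intro c a ha x hx
    have h : binInner x (c • a) = c * binInner x a := by
      simp only [binInner, Pi.smul_apply, smul_eq_mul, Finset.mul_sum]
      exact Finset.sum_congr rfl fun j _ => by ring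
    rw [h, ha x hx, mul_zero]

/-- A CSS-T pair of binary linear codes: `C₂ ⊆ C₁`, every codeword of `C₂` has even
weight, and for each `x ∈ C₂` there is a self-dual code in `C₁^⊥`, of dimension
`w_H(x)/2`, supported on `x`. -/
def CSST (C₁ C₂ : Submodule (ZMod 2) (ι → ZMod 2)) : Prop :=
  C₂ ≤ C₁ ∧
  (∀ x ∈ C₂, Even (wH x)) ∧
  (∀ x ∈ C₂, ∃ Cx : Submodule (ZMod 2) (ι → ZMod 2),
    Cx ≤ dualCode C₁ ∧
    2 * Module.finrank (ZMod 2) Cx = wH x ∧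
    (∀ z ∈ Cx, supportLE z x) ∧
    (∀ y ∈ Cx, ∀ z ∈ Cx, binInner y z = 0))

/-- A family of rows is triorthogonal if all pairs and triples of distinct rows have
even overlap. -/
def Triorthogonal {p : ℕ} (g : Fin p → ι → ZMod 2) : Prop :=
  (∀ a b : Fin p, a < b → Even (wH (g a * g b))) ∧
  (∀ a b c : Fin p, a < b → b < c → Even (wH (g a * g b * g c)))

end Binary

/-- Binary vectors of length `n`. -/
abbrev V (n : ℕ) := Fin n → ZMod 2

/-- The Hermitian `n`-qubit Pauli matrix
`E(a,b) = ⊗_j i^{a_j b_j} X^{a_j} Z^{b_j}`, written entrywise: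
`E(a,b)[u,v] = i^{∑ a_j b_j} · 1[u = v ⊕ a] · (−1)^{∑ b_j v_j}`. -/
def PauliE {n : ℕ} (a b : V n) : Matrix (V n) (V n) ℂ :=
  Matrix.of fun u v =>
    Complex.I ^ (∑ j, (a j).val * (b j).val) *
      (if u = v + a then 1 else 0) *
      (-1 : ℂ) ^ (∑ j, (b j).val * (v j).val)

/-- The transversal `T` gate `T^{⊗n}`, where `T = diag(1, e^{iπ/4})`; it is the diagonal
matrix whose entry at `v` is `e^{iπ w_H(v)/4}`. -/
noncomputable def transT (n : ℕ) : Matrix (V n) (V n) ℂ :=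
  Matrix.diagonal fun v : V n => Complex.exp ((Real.pi : ℂ) * Complex.I / 4) ^ wH v

/-- `ε` is a sign `±1`. -/
def IsSign (ε : ℂ) : Prop := ε = 1 ∨ ε = -1

/-- A stabilizer group on `n` qubits, given as the finite set of its elements:
each element is `±E(a,b)`, the set is closed under multiplication, abelian,
nonempty (hence contains the identity), and does not contain `−I`. -/
def IsStabilizer (n : ℕ) (S : Finset (Matrix (V n) (V n) ℂ)) : Prop :=
  S.Nonempty ∧
  (∀ g ∈ S, ∃ (ε : ℂ) (a b : V n), IsSign ε ∧ g = ε • PauliE a b) ∧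
  (∀ g ∈ S, ∀ h ∈ S, g * h ∈ S) ∧
  (∀ g ∈ S, ∀ h ∈ S, g * h = h * g) ∧
  (-1 : Matrix (V n) (V n) ℂ) ∉ S

/-- The code projector `Π_S = |S|⁻¹ ∑_{g ∈ S} g  (= 2^{−r} ∑_j ε_j E(a_j,b_j))`. -/
noncomputable def stabProj {n : ℕ} (S : Finset (Matrix (V n) (V n) ℂ)) :
    Matrix (V n) (V n) ℂ :=
  (S.card : ℂ)⁻¹ • ∑ g ∈ S, g

/-!
Both sides vanish off the entries `(v + a, v)`, and every such entry factors over the qubits,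
so the identity reduces to one qubit: `T Z^β T† = Z^β`, while `T X T† = (X + Y)/√2` follows
entrywise from `e^{iπ/4} = (1 + i)/√2`. Expanding the product of the single-qubit sums
`∑_{y_j ⪯ a_j}` gives the sum over `y ⪯ a`.
-/

open Complex ComplexConjugate Real

local notation "ω" => Complex.exp (Real.pi * Complex.I / 4)

lemma wH_eq_sum_val {ι : Type*} [Fintype ι] [DecidableEq ι] (x : ι → ZMod 2) :
    wH x = ∑ j, (x j).val := by
  rw [wH, Finset.card_eq_sum_ones, Finset.sum_filter]
  exact Finset.sum_congr rfl fun j _ => by generalize x j = z; revert z; decide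

lemma sum_supportLE_prod {ι R : Type*} [Fintype ι] [DecidableEq ι] [CommSemiring R]
    (a : ι → ZMod 2) (f : ι → ZMod 2 → R) :
    ∑ y ∈ Finset.univ.filter (fun y => supportLE y a), ∏ j, f j (y j) =
      ∏ j, ∑ z ∈ Finset.univ.filter (fun z : ZMod 2 => z = 1 → a j = 1), f j z := by
  rw [Finset.prod_univ_sum]
  refine Finset.sum_congr ?_ fun _ _ => rfl
  ext y
  simp only [Fintype.mem_piFinset, Finset.mem_filter_univ]
  rfl

lemma ZMod.sum_univ_two {M : Type*} [AddCommMonoid M] (f : ZMod 2 → M) :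
    ∑ x, f x = f 0 + f 1 :=
  Fin.sum_univ_two f

lemma ofReal_sqrt_two_sq : ((√2 : ℝ) : ℂ) ^ 2 = 2 := by
  norm_cast
  exact Real.sq_sqrt zero_le_two

lemma exp_pi_mul_I_div_four : ω = (1 + I) / (√2 : ℂ) := by
  rw [show (π : ℂ) * I / 4 = ((π / 4 : ℝ) : ℂ) * I by push_cast; ring, exp_mul_I,
    ← ofReal_cos, ← ofReal_sin, Real.cos_pi_div_four, Real.sin_pi_div_four]
  have hs : (√2 : ℂ) ≠ 0 := by norm_cast; positivity
  field_simp
  push_cast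
  linear_combination (1 + I) / 2 * ofReal_sqrt_two_sq

/-- The entry of the single-qubit Pauli matrix `i^{αβ} X^α Z^β` in row `υ + α`, column `υ`. -/
def pauliCoeff (α β υ : ZMod 2) : ℂ := I ^ (α.val * β.val) * (-1) ^ (β.val * υ.val)

lemma PauliE_apply_add {n : ℕ} (a b v : V n) :
    PauliE a b (v + a) v = ∏ j, pauliCoeff (a j) (b j) (v j) := by
  simp [PauliE, pauliCoeff, Finset.prod_mul_distrib, Finset.prod_pow_eq_pow_sum]

lemma PauliE_apply_of_ne {n : ℕ} {a b u v : V n} (h : u ≠ v + a) : PauliE a b u v = 0 := by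
  simp [PauliE, h]

lemma transT_conj_apply {n : ℕ} (M : Matrix (V n) (V n) ℂ) (u v : V n) :
    (transT n * M * (transT n)ᴴ) u v = ω ^ wH u * M u v * conj ω ^ wH v := by
  simp [transT, Matrix.diagonal_conjTranspose, Matrix.mul_diagonal, Matrix.diagonal_mul]

lemma T_conj_pauliCoeff (α β υ : ZMod 2) :
    ω ^ (υ + α).val * pauliCoeff α β υ * conj ω ^ υ.val =
      (√2 : ℂ)⁻¹ ^ α.val *
        ∑ y ∈ Finset.univ.filter (fun y : ZMod 2 => y = 1 → α = 1),
          (-1) ^ (β.val * y.val) * pauliCoeff α (β + y) υ := by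
  have h2 := ofReal_sqrt_two_sq
  have hI := I_sq
  have hs : (√2 : ℂ) ≠ 0 := by norm_cast; positivity
  rw [exp_pi_mul_I_div_four, map_div₀, map_add, conj_I, conj_ofReal, map_one, ← sub_eq_add_neg]
  have hv : ∀ x : ZMod 2, x = 0 ∨ x = 1 := by decide
  have h11 : (1 : ZMod 2) + 1 = 0 := rfl
  rcases hv α with rfl | rfl <;> rcases hv β with rfl | rfl <;> rcases hv υ with rfl | rfl <;>
    simp only [Finset.sum_filter, ZMod.sum_univ_two] <;>
    simp [pauliCoeff, ZMod.val_one, h11] <;> field_simp <;> grind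

lemma transT_conj_PauliE_apply_add {n : ℕ} (a b v : V n) :
    (transT n * PauliE a b * (transT n)ᴴ) (v + a) v =
      ∏ j, ω ^ (v j + a j).val * pauliCoeff (a j) (b j) (v j) * conj ω ^ (v j).val := by
  simp only [transT_conj_apply, PauliE_apply_add, wH_eq_sum_val, Pi.add_apply,
    ← Finset.prod_pow_eq_pow_sum, Finset.prod_mul_distrib]

theorem transversalT_conj_pauli_general (n : ℕ) (a b : V n) :
    transT n * PauliE a b * (transT n)ᴴ =
      (((Real.sqrt 2)⁻¹ ^ wH a : ℝ) : ℂ) •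
        ∑ y ∈ Finset.univ.filter (fun y : V n => supportLE y a),
          ((-1 : ℂ) ^ (∑ j, (b j).val * (y j).val)) • PauliE a (b + y) := by
  ext u v
  rw [Matrix.smul_apply, Matrix.sum_apply]
  by_cases h : u = v + a
  · subst h
    simp only [transT_conj_PauliE_apply_add, T_conj_pauliCoeff, Finset.prod_mul_distrib,
      Finset.prod_pow_eq_pow_sum, ← wH_eq_sum_val, ← sum_supportLE_prod, Matrix.smul_apply,
      PauliE_apply_add, Pi.add_apply, smul_eq_mul]
    norm_cast
  · simp [transT_conj_apply, PauliE_apply_of_ne h]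

/-- For every `n ≥ 1` and all `a, b ∈ F₂ⁿ`,
`T^{⊗n} E(a,b) (T^{⊗n})† = 2^{−w_H(a)/2} ∑_{y ⪯ a} (−1)^{b yᵀ} E(a, b ⊕ y)`. -/
theorem transversalT_conj_pauli (n : ℕ) (hn : 1 ≤ n) (a b : V n) :
    transT n * PauliE a b * (transT n)ᴴ =
      (((Real.sqrt 2)⁻¹ ^ wH a : ℝ) : ℂ) •
        ∑ y ∈ Finset.univ.filter (fun y : V n => supportLE y a),
          ((-1 : ℂ) ^ (∑ j, (b j).val * (y j).val)) • PauliE a (b + y) :=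
  transversalT_conj_pauli_general n a b
end

section
/- Let (C1, C2) be a CSS-T pair of length n, let k = dim C1 − dim C2, let x_1,…,x_k ∈ C1 be vectors whose cosets modulo C2 form a basis of C1/C2, let G_{C1/C2} be the k×n matrix with rows x_1,…,x_k, let G_2 be a generator matrix of C2, and let G_1 be the stacked matrix [G_{C1/C2}; G_2] (a generator matrix of C1). For v ∈ F_2^k define the CSS basis state |v⟩_L = |C2|^{−1/2} Σ_{c ∈ C2} e_{(v G_{C1/C2}) ⊕ c} ∈ ℂ^{2^n}, where e_u denotes the standard basis vector of ℂ^{2^n} indexed by u ∈ F_2^n. Then the following are equivalent: (A) physical transversal T realizes logical transversal T without Clifford corrections, i.e., T^{⊗n} |v⟩_L = e^{iπ w_H(v)/4} |v⟩_L for all v ∈ F_2^k; (B) the matrix G_1 is triorthogonal, and for every a ∈ C2 and every c = (c_1,…,c_k) ∈ F_2^k, setting x = c_1 x_1 ⊕ ⋯ ⊕ c_k x_k, one has w_H(x ⊕ a) ≡ w_H(c) (mod 8). -/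
open Matrix BigOperators

/-- The CSS basis state `|u + C⟩ = |C|^{−1/2} ∑_{c ∈ C} e_{u ⊕ c}` as a vector in
`ℂ^{2^n}` (functions `V n → ℂ`). -/
noncomputable def cssState {n : ℕ} (C : Submodule (ZMod 2) (V n)) (u : V n) : V n → ℂ :=
  (((Real.sqrt (Nat.card C))⁻¹ : ℝ) : ℂ) •
    ∑ c ∈ Set.Finite.toFinset (Set.toFinite (C : Set (V n))),
      (fun w : V n => if w = u + c then (1 : ℂ) else 0)


/-! ### Auxiliary lemmas -/

section ZetaLemmas

lemma zeta8 : Complex.exp ((Real.pi : ℂ) * Complex.I / 4) ^ 8 = 1 := by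
  rw [← Complex.exp_nat_mul]
  rw [show ((8:ℕ):ℂ) * ((Real.pi : ℂ) * Complex.I / 4) = 2 * (Real.pi:ℂ) * Complex.I by
    push_cast; ring]
  exact Complex.exp_two_pi_mul_I

lemma zeta_pow_congr {m l : ℕ} (h : m ≡ l [MOD 8]) :
    Complex.exp ((Real.pi : ℂ) * Complex.I / 4) ^ m =
      Complex.exp ((Real.pi : ℂ) * Complex.I / 4) ^ l := by
  have key : ∀ t : ℕ, Complex.exp ((Real.pi : ℂ) * Complex.I / 4) ^ t =
      Complex.exp ((Real.pi : ℂ) * Complex.I / 4) ^ (t % 8) := by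
    intro t
    conv_lhs => rw [← Nat.div_add_mod t 8]
    rw [pow_add, pow_mul, zeta8, one_pow, one_mul]
  have h' : m % 8 = l % 8 := h
  rw [key m, key l, h']

lemma zeta_pow_inj {m l : ℕ}
    (h : Complex.exp ((Real.pi : ℂ) * Complex.I / 4) ^ m =
      Complex.exp ((Real.pi : ℂ) * Complex.I / 4) ^ l) : m ≡ l [MOD 8] := by
  rw [← Complex.exp_nat_mul, ← Complex.exp_nat_mul] at h
  have h1 : Complex.exp ((m:ℂ) * ((Real.pi : ℂ) * Complex.I / 4)
      - (l:ℂ) * ((Real.pi : ℂ) * Complex.I / 4)) = 1 := by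
    rw [Complex.exp_sub, h, div_self (Complex.exp_ne_zero _)]
  rw [Complex.exp_eq_one_iff] at h1
  obtain ⟨t, ht⟩ := h1
  have hπ : (Real.pi : ℂ) ≠ 0 := by exact_mod_cast Real.pi_ne_zero
  have h2 : ((m:ℂ) - l) * ((Real.pi:ℂ) * Complex.I)
      = ((8*t : ℤ):ℂ) * ((Real.pi:ℂ) * Complex.I) := by
    push_cast
    linear_combination 4 * ht
  have h3 : (m:ℂ) - l = ((8*t : ℤ):ℂ) :=
    mul_right_cancel₀ (mul_ne_zero hπ Complex.I_ne_zero) h2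
  have h4 : (m:ℤ) - l = 8*t := by exact_mod_cast h3
  unfold Nat.ModEq
  omega

end ZetaLemmas

section WeightLemmas

variable {ι : Type*} [Fintype ι] [DecidableEq ι]

lemma wH_eq_sum (x : ι → ZMod 2) : wH x = ∑ j, (x j).val := by
  unfold wH
  rw [Finset.card_filter]
  refine Finset.sum_congr rfl fun j _ => ?_
  have : ∀ a : ZMod 2, (if a = 1 then 1 else 0) = a.val := by decide
  exact this (x j)

lemma wH_zero : wH (0 : ι → ZMod 2) = 0 := by
  simp [wH_eq_sum]

lemma wH_add_identity (u v : ι → ZMod 2) :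
    wH (u + v) + 2 * wH (u * v) = wH u + wH v := by
  simp only [wH_eq_sum, Finset.mul_sum, ← Finset.sum_add_distrib]
  refine Finset.sum_congr rfl fun j _ => ?_
  have : ∀ a b : ZMod 2, (a + b).val + 2 * ((a * b).val) = a.val + b.val := by decide
  simpa using this (u j) (v j)

omit [Fintype ι] [DecidableEq ι] in
lemma mul3_assoc (u v w : ι → ZMod 2) : u * w * (v * w) = u * v * w := by
  funext j
  have : ∀ a b c : ZMod 2, a * c * (b * c) = a * b * c := by decide
  simpa using this (u j) (v j) (w j)

end WeightLemmas

section KPKT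

variable {n k : ℕ} (C₂ : Submodule (ZMod 2) (V n)) (x : Fin k → V n)

lemma sum_smul_add (c c' : Fin k → ZMod 2) :
    (∑ i, (c + c') i • x i) = (∑ i, c i • x i) + (∑ i, c' i • x i) := by
  rw [← Finset.sum_add_distrib]
  exact Finset.sum_congr rfl fun i _ => by simp [add_smul]

lemma KP (H : ∀ a ∈ C₂, ∀ c : Fin k → ZMod 2,
      wH ((∑ i, c i • x i) + a) ≡ wH c [MOD 8])
    (c c' : Fin k → ZMod 2) (a a' : V n) (ha : a ∈ C₂) (ha' : a' ∈ C₂)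
    (hcc : c * c' = 0) :
    wH (((∑ i, c i • x i) + a) * ((∑ i, c' i • x i) + a')) % 4 = 0 := by
  set u := (∑ i, c i • x i) + a with hu
  set v := (∑ i, c' i • x i) + a' with hv
  have huv : u + v = (∑ i, (c + c') i • x i) + (a + a') := by
    rw [sum_smul_add, hu, hv]; abel
  have h1 := wH_add_identity u v
  have h2 := wH_add_identity c c'
  rw [hcc, wH_zero] at h2
  have e1 : wH (u + v) ≡ wH (c + c') [MOD 8] := by
    rw [huv]; exact H (a + a') (C₂.add_mem ha ha') (c + c')
  have e2 : wH u ≡ wH c [MOD 8] := H a ha c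
  have e3 : wH v ≡ wH c' [MOD 8] := H a' ha' c'
  unfold Nat.ModEq at e1 e2 e3
  omega

lemma KT (H : ∀ a ∈ C₂, ∀ c : Fin k → ZMod 2,
      wH ((∑ i, c i • x i) + a) ≡ wH c [MOD 8])
    (c c' c'' : Fin k → ZMod 2) (a a' a'' : V n)
    (ha : a ∈ C₂) (ha' : a' ∈ C₂) (ha'' : a'' ∈ C₂)
    (h12 : c * c' = 0) (h13 : c * c'' = 0) (h23 : c' * c'' = 0) :
    wH (((∑ i, c i • x i) + a) * ((∑ i, c' i • x i) + a')
        * ((∑ i, c'' i • x i) + a'')) % 2 = 0 := by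
  set u := (∑ i, c i • x i) + a with hu
  set v := (∑ i, c' i • x i) + a' with hv
  set w := (∑ i, c'' i • x i) + a'' with hw
  have h1 := wH_add_identity (u + v) w
  have h2 := wH_add_identity (u * w) (v * w)
  rw [mul3_assoc, show u * w + v * w = (u + v) * w from (add_mul u v w).symm] at h2
  have h3 := wH_add_identity u v
  have hcc' : wH (c + c') + 0 = wH c + wH c' := by
    have := wH_add_identity c c'; rwa [h12, wH_zero, Nat.mul_zero] at this
  have hccc : wH (c + c' + c'') + 0 = wH (c + c') + wH c'' := by
    have hd : (c + c') * c'' = 0 := by rw [add_mul, h13, h23, add_zero]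
    have := wH_add_identity (c + c') c''; rwa [hd, wH_zero, Nat.mul_zero] at this
  have huvw : u + v + w = (∑ i, (c + c' + c'') i • x i) + (a + a' + a'') := by
    rw [sum_smul_add, sum_smul_add, hu, hv, hw]; abel
  have HA : wH (u + v + w) ≡ wH (c + c' + c'') [MOD 8] := by
    rw [huvw]; exact H _ (C₂.add_mem (C₂.add_mem ha ha') ha'') _
  have HUV : wH (u + v) ≡ wH (c + c') [MOD 8] := by
    rw [show u + v = (∑ i, (c + c') i • x i) + (a + a') by
      rw [sum_smul_add, hu, hv]; abel]
    exact H _ (C₂.add_mem ha ha') _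
  have HW : wH w ≡ wH c'' [MOD 8] := H a'' ha'' c''
  have P1 : wH (u * w) % 4 = 0 := KP C₂ x H c c'' a a'' ha ha'' h13
  have P2 : wH (v * w) % 4 = 0 := KP C₂ x H c' c'' a' a'' ha' ha'' h23
  unfold Nat.ModEq at HA HUV HW
  omega

end KPKT

section Rows

/-- The `F₂^k`-coefficient vector of row `r` of the stacked matrix. -/
def crow (k k₂ : ℕ) (r : Fin (k + k₂)) : Fin k → ZMod 2 :=
  Fin.addCases (fun i => Pi.single i 1) (fun _ => 0) r

/-- The `C₂`-part of row `r` of the stacked matrix. -/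
def arow {α : Type*} [Zero α] {k k₂ : ℕ} (g₂ : Fin k₂ → α) (r : Fin (k + k₂)) : α :=
  Fin.addCases (fun _ => 0) g₂ r

lemma crow_disjoint {k k₂ : ℕ} {r s : Fin (k + k₂)} (h : r ≠ s) :
    crow k k₂ r * crow k k₂ s = 0 := by
  induction r using Fin.addCases with
  | left i =>
    induction s using Fin.addCases with
    | left j =>
      have hij : i ≠ j := fun hh => h (by rw [hh])
      funext t
      simp only [crow, Fin.addCases_left, Pi.mul_apply, Pi.single_apply, Pi.zero_apply]
      split_ifs with h1 h2
      · exact absurd (h1.symm.trans h2) hij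
      · exact mul_zero _
      · exact zero_mul _
      · exact zero_mul _
    | right j =>
      funext t; simp [crow]
  | right i =>
    funext t; simp [crow]

lemma append_row {n k k₂ : ℕ} (x : Fin k → V n) (g₂ : Fin k₂ → V n) (r : Fin (k + k₂)) :
    Fin.append x g₂ r = (∑ i, crow k k₂ r i • x i) + arow g₂ r := by
  induction r using Fin.addCases with
  | left i =>
    simp only [crow, arow, Fin.addCases_left, Fin.append_left, add_zero]
    rw [Finset.sum_eq_single i]
    · simp
    · intro b _ hb; rw [Pi.single_eq_of_ne hb, zero_smul]
    · intro hb; exact absurd (Finset.mem_univ i) hb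
  | right j =>
    simp only [crow, arow, Fin.addCases_right, Fin.append_right]
    simp

end Rows

/-- Let `(C₁, C₂)` be a CSS-T pair, with `x₁,…,x_k ∈ C₁` whose cosets form
a basis of `C₁/C₂` (the rows of `G_{C₁/C₂}`), and `g₂` a generator matrix of `C₂`.
Then physical transversal `T` realizes logical transversal `T` without Clifford
corrections, i.e. `T^{⊗n} |v⟩_L = e^{iπ w_H(v)/4} |v⟩_L` for all `v ∈ F₂^k`, if and only if
the stacked matrix `G₁ = [G_{C₁/C₂}; G₂]` is triorthogonal and for every `a ∈ C₂` and
`c ∈ F₂^k`, setting `x = ⊕ᵢ cᵢ xᵢ`, one has `w_H(x ⊕ a) ≡ w_H(c) (mod 8)`. -/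
theorem logical_transversal_T_iff_triorthogonal (n k k₂ : ℕ)
    (C₁ C₂ : Submodule (ZMod 2) (V n)) (hcsst : CSST C₁ C₂)
    (hk : Module.finrank (ZMod 2) C₁ = Module.finrank (ZMod 2) C₂ + k)
    (x : Fin k → V n) (hx : ∀ i, x i ∈ C₁)
    (hindep : ∀ c : Fin k → ZMod 2, (∑ i, c i • x i) ∈ C₂ → c = 0)
    (hspan : ∀ v ∈ C₁, ∃ c : Fin k → ZMod 2, v + ∑ i, c i • x i ∈ C₂)
    (g₂ : Fin k₂ → V n) (hg₂span : Submodule.span (ZMod 2) (Set.range g₂) = C₂)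
    (hg₂indep : LinearIndependent (ZMod 2) g₂) :
    (∀ v : Fin k → ZMod 2,
        (transT n).mulVec (cssState C₂ (∑ i, v i • x i)) =
          (Complex.exp ((Real.pi : ℂ) * Complex.I / 4) ^ wH v) •
            cssState C₂ (∑ i, v i • x i)) ↔
      (Triorthogonal (Fin.append x g₂) ∧
        ∀ a ∈ C₂, ∀ c : Fin k → ZMod 2,
          wH ((∑ i, c i • x i) + a) ≡ wH c [MOD 8]) := by
  classical
  have haddself : ∀ y : V n, y + y = 0 := by
    intro y; funext j
    have : ∀ a : ZMod 2, a + a = 0 := by decide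
    exact this (y j)
  haveI : Nonempty ↥C₂ := ⟨⟨0, C₂.zero_mem⟩⟩
  have hpos : 0 < Nat.card ↥C₂ := Nat.card_pos
  have hrne : ((((Real.sqrt (Nat.card ↥C₂))⁻¹ : ℝ)) : ℂ) ≠ 0 := by
    have h0 : (0:ℝ) < Real.sqrt (Nat.card ↥C₂) := Real.sqrt_pos.mpr (by exact_mod_cast hpos)
    simp only [ne_eq, Complex.ofReal_eq_zero]
    exact inv_ne_zero (ne_of_gt h0)
  have heval : ∀ u w : V n, cssState C₂ u w =
      ((((Real.sqrt (Nat.card ↥C₂))⁻¹ : ℝ)) : ℂ) * (if u + w ∈ C₂ then 1 else 0) := by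
    intro u w
    simp only [cssState, Pi.smul_apply, Finset.sum_apply, smul_eq_mul]
    congr 1
    have hiff : ∀ cc : V n, (w = u + cc) ↔ (u + w = cc) := by
      intro cc
      constructor
      · intro h; rw [h, ← add_assoc, haddself, zero_add]
      · intro h; rw [← h, ← add_assoc, haddself, zero_add]
    rw [Finset.sum_congr rfl fun cc _ => if_congr (hiff cc) rfl rfl]
    rw [Finset.sum_ite_eq]
    simp only [Set.Finite.mem_toFinset]
    exact if_congr Iff.rfl rfl rfl
  have hT : ∀ (f : V n → ℂ) (w : V n),
      (transT n).mulVec f w = Complex.exp ((Real.pi : ℂ) * Complex.I / 4) ^ wH w * f w := by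
    intro f w
    simp [transT, Matrix.mulVec_diagonal]
  have hAiff : (∀ v : Fin k → ZMod 2,
      (transT n).mulVec (cssState C₂ (∑ i, v i • x i)) =
        (Complex.exp ((Real.pi : ℂ) * Complex.I / 4) ^ wH v) •
          cssState C₂ (∑ i, v i • x i)) ↔
      (∀ a ∈ C₂, ∀ c : Fin k → ZMod 2, wH ((∑ i, c i • x i) + a) ≡ wH c [MOD 8]) := by
    constructor
    · intro hA a ha c
      have h := congrFun (hA c) ((∑ i, c i • x i) + a)
      rw [hT, Pi.smul_apply, smul_eq_mul, heval] at h
      rw [show (∑ i, c i • x i) + ((∑ i, c i • x i) + a) = a from by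
        rw [← add_assoc, haddself, zero_add]] at h
      rw [if_pos ha, mul_one] at h
      exact zeta_pow_inj (mul_right_cancel₀ hrne h)
    · intro H v
      funext w
      rw [hT, Pi.smul_apply, smul_eq_mul, heval]
      by_cases h : (∑ i, v i • x i) + w ∈ C₂
      · rw [if_pos h, mul_one]
        have hw : (∑ i, v i • x i) + ((∑ i, v i • x i) + w) = w := by
          rw [← add_assoc, haddself, zero_add]
        have hcong := H _ h v
        rw [hw] at hcong
        rw [zeta_pow_congr hcong]
      · rw [if_neg h, mul_zero, mul_zero, mul_zero]
  rw [hAiff]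
  constructor
  · intro H
    refine ⟨?_, H⟩
    have hmem : ∀ r : Fin (k + k₂), arow g₂ r ∈ C₂ := by
      intro r
      induction r using Fin.addCases with
      | left i => simp only [arow, Fin.addCases_left]; exact C₂.zero_mem
      | right j =>
        simp only [arow, Fin.addCases_right]
        rw [← hg₂span]
        exact Submodule.subset_span ⟨j, rfl⟩
    constructor
    · intro a b hab
      rw [append_row x g₂ a, append_row x g₂ b]
      have := KP C₂ x H (crow k k₂ a) (crow k k₂ b) (arow g₂ a) (arow g₂ b)
        (hmem a) (hmem b) (crow_disjoint (ne_of_lt hab))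
      exact Nat.even_iff.mpr (by omega)
    · intro a b c hab hbc
      rw [append_row x g₂ a, append_row x g₂ b, append_row x g₂ c]
      have := KT C₂ x H (crow k k₂ a) (crow k k₂ b) (crow k k₂ c)
        (arow g₂ a) (arow g₂ b) (arow g₂ c) (hmem a) (hmem b) (hmem c)
        (crow_disjoint (ne_of_lt hab)) (crow_disjoint (ne_of_lt (hab.trans hbc)))
        (crow_disjoint (ne_of_lt hbc))
      exact Nat.even_iff.mpr this
  · rintro ⟨-, H⟩
    exact H
end

section
/- Let (C1, C2) be a CSS-T pair of length n. Then C1 ∗ C2 ⊆ C1^⊥, i.e., for every a ∈ C1 and every x ∈ C2, the coordinatewise product a ∗ x lies in the dual code C1^⊥. -/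
open Matrix BigOperators

/-! A self-orthogonal code `C_x` supported on `x` with `2 · dim C_x = w_H(x)` is self-dual inside
`F₂^{supp x}`, so it contains every vector supported on `x` that is orthogonal to it. For
`a ∈ C₁` the vector `a ∗ x` is supported on `x`, and for `z ∈ C_x ⊆ C₁^⊥` we have
`⟨z, a ∗ x⟩ = ⟨z, a⟩ = 0` because `z ⪯ x`; hence `a ∗ x ∈ C_x ⊆ C₁^⊥`. -/

open Module

theorem LinearMap.BilinForm.orthogonal_eq_self_of_le_of_two_mul_finrank_eq
    {K V : Type*} [Field K] [AddCommGroup V] [Module K V] [FiniteDimensional K V]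
    {B : LinearMap.BilinForm K V} (hB : B.Nondegenerate) {W : Submodule K V}
    (hW : W ≤ B.orthogonal W) (hdim : 2 * finrank K W = finrank K V) :
    B.orthogonal W = W :=
  (Submodule.eq_of_le_of_finrank_le hW (by rw [finrank_orthogonal hB]; omega)).symm

section Support

variable {ι : Type*}

lemma zmod_two_eq_one_of_ne_zero : ∀ {s : ZMod 2}, s ≠ 0 → s = 1 := by decide

lemma supportLE.apply_eq_one {z x : ι → ZMod 2} (h : supportLE z x) {j : ι} (hz : z j ≠ 0) :
    x j = 1 :=
  h j (zmod_two_eq_one_of_ne_zero hz)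

lemma supportLE.apply_eq_zero {z x : ι → ZMod 2} (h : supportLE z x) {j : ι} (hj : x j ≠ 1) :
    z j = 0 :=
  by_contra fun hz => hj (h.apply_eq_one hz)

lemma supportLE.mul_eq_self {z x : ι → ZMod 2} (h : supportLE z x) : z * x = z := by
  have key : ∀ s t : ZMod 2, (s = 1 → t = 1) → s * t = s := by decide
  exact funext fun j => key _ _ (h j)

lemma supportLE_mul_left (a x : ι → ZMod 2) : supportLE (a * x) x := by
  have key : ∀ s t : ZMod 2, s * t = 1 → t = 1 := by decide
  exact fun _ => key _ _

lemma supportLE.binInner_mul_left [Fintype ι] {z x : ι → ZMod 2} (h : supportLE z x)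
    (a : ι → ZMod 2) :
    binInner z (a * x) = binInner a z := by
  conv_rhs => rw [← h.mul_eq_self]
  exact Finset.sum_congr rfl fun _ _ => by simp only [Pi.mul_apply]; ring

def restrictSupport [Fintype ι] (x : ι → ZMod 2) :
    (ι → ZMod 2) →ₗ[ZMod 2] ({j // x j = 1} → ZMod 2) :=
  LinearMap.funLeft (ZMod 2) (ZMod 2) Subtype.val

lemma supportLE.restrictSupport_dotProduct [Fintype ι] {v x : ι → ZMod 2} (hv : supportLE v x)
    (w : ι → ZMod 2) : restrictSupport x v ⬝ᵥ restrictSupport x w = binInner v w := by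
  classical
  calc restrictSupport x v ⬝ᵥ restrictSupport x w
      = ∑ j ∈ Finset.univ.filter (fun j => x j = 1), v j * w j :=
        (Finset.sum_subtype _ (fun j => Finset.mem_filter_univ j) (fun j => v j * w j)).symm
    _ = binInner v w :=
        Finset.sum_filter_of_ne fun _ _ hj => hv.apply_eq_one (left_ne_zero_of_mul hj)

lemma supportLE.eq_of_restrictSupport_eq [Fintype ι] {v w x : ι → ZMod 2} (hv : supportLE v x)
    (hw : supportLE w x) (h : restrictSupport x v = restrictSupport x w) : v = w := by
  funext j
  by_cases hj : x j = 1
  · exact congrFun h ⟨j, hj⟩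
  · rw [hv.apply_eq_zero hj, hw.apply_eq_zero hj]

lemma finrank_map_restrictSupport [Fintype ι] {x : ι → ZMod 2}
    {C : Submodule (ZMod 2) (ι → ZMod 2)} (hC : ∀ z ∈ C, supportLE z x) :
    finrank (ZMod 2) (C.map (restrictSupport x)) = finrank (ZMod 2) C := by
  have hinj : Function.Injective (restrictSupport x ∘ₗ C.subtype) := fun y z h =>
    Subtype.ext ((hC y y.2).eq_of_restrictSupport_eq (hC z z.2) h)
  rw [← LinearMap.finrank_range_of_inj hinj, LinearMap.range_comp, Submodule.range_subtype]

end Support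

theorem mem_of_supportLE_of_forall_binInner_eq_zero {ι : Type*} [Fintype ι]
    {C : Submodule (ZMod 2) (ι → ZMod 2)} {x v : ι → ZMod 2} (hC : ∀ z ∈ C, supportLE z x)
    (hself : ∀ y ∈ C, ∀ z ∈ C, binInner y z = 0) (hdim : 2 * finrank (ZMod 2) C = wH x)
    (hv : supportLE v x) (hvC : ∀ z ∈ C, binInner z v = 0) : v ∈ C := by
  classical
  -- the dot product of `F₂^{supp x}`, as the form of the identity matrix so that `det 1 ≠ 0`
  -- gives nondegeneracy
  set B := Matrix.toBilin' (1 : Matrix {j // x j = 1} {j // x j = 1} (ZMod 2))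
  have hB : ∀ {z} w, supportLE z x →
      B (restrictSupport x z) (restrictSupport x w) = binInner z w := fun w hz => by
    simpa [B, Matrix.toBilin'_apply'] using hz.restrictSupport_dotProduct w
  set W := C.map (restrictSupport x)
  have hWself : B.orthogonal W = W := by
    refine LinearMap.BilinForm.orthogonal_eq_self_of_le_of_two_mul_finrank_eq
      (Matrix.nondegenerate_of_det_ne_zero (by simp)).toBilin' ?_ ?_
    · rintro _ ⟨z, hz, rfl⟩
      rw [LinearMap.BilinForm.mem_orthogonal_iff]
      rintro _ ⟨y, hy, rfl⟩
      rw [hB z (hC y hy)]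
      exact hself y hy z hz
    · rw [finrank_map_restrictSupport hC, hdim, Module.finrank_fintype_fun_eq_card,
        Fintype.card_subtype]
      rfl
  have hvW : restrictSupport x v ∈ B.orthogonal W := by
    rw [LinearMap.BilinForm.mem_orthogonal_iff]
    rintro _ ⟨z, hz, rfl⟩
    rw [hB v (hC z hz)]
    exact hvC z hz
  rw [hWself] at hvW
  obtain ⟨z, hz, hzv⟩ := hvW
  rwa [(hC z hz).eq_of_restrictSupport_eq hv hzv] at hz

/-- For a CSS-T pair `(C₁, C₂)` of length `n`, the coordinatewise product
of any `a ∈ C₁` and `x ∈ C₂` lies in the dual code `C₁^⊥`, i.e. `C₁ ∗ C₂ ⊆ C₁^⊥`. -/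
theorem csst_star_subset_dual (n : ℕ) (C₁ C₂ : Submodule (ZMod 2) (V n))
    (h : CSST C₁ C₂) :
    ∀ a ∈ C₁, ∀ x ∈ C₂, a * x ∈ dualCode C₁ := by
  intro a ha x hx
  obtain ⟨Cx, hCx, hdim, hsupp, hself⟩ := h.2.2 x hx
  refine hCx (mem_of_supportLE_of_forall_binInner_eq_zero hsupp hself hdim
    (supportLE_mul_left a x) fun z hz => ?_)
  rw [(hsupp z hz).binInner_mul_left]
  exact hCx hz a ha
end

section
/- Let S be a stabilizer group on n qubits satisfying T^{⊗n} Π_S (T^{⊗n})† = Π_S. Let z ∈ F_2^n and ε ∈ {±1} be such that ε E(0,z) commutes with every element of S, ε E(0,z) ∉ S, and −I is not contained in the group S′ generated by S and ε E(0,z). Then S′ is a stabilizer group and T^{⊗n} Π_{S′} (T^{⊗n})† = Π_{S′}; in particular, Π_{S′} = Π_S · (I + ε E(0,z))/2 and the transversal-T property is preserved by adjoining any such Z-type generator. -/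
open Matrix BigOperators

noncomputable instance {n : ℕ} : DecidableEq (Matrix (V n) (V n) ℂ) := Classical.decEq _

/-!
Write `P = εE(0,z)`. Every signed Pauli squares to `I`, so `S' = S ∪ S·P` is the disjoint union
of `S` and its translate (disjoint because `P ∉ S`), whence `Π_{S'} = Π_S (I + P)/2`. Comparing the
entries of `E(0,z)E(a,b)` and `E(a,b)E(0,z)` shows that they commute exactly when `a·z` is even,
and then `±E(a,b) · P` is again a signed Pauli `±E(a, b+z)`. Finally `P` is diagonal, like
`T^{⊗n}`, so `I + P` commutes with `(T^{⊗n})†` and the invariance of `Π_S` passes to `Π_{S'}`.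
-/

lemma isUnit_of_mul_self_eq_one {M : Type*} [Monoid M] {p : M} (hp : p * p = 1) : IsUnit p :=
  ⟨⟨p, p, hp, hp⟩, rfl⟩

section AdjoinInvolution

variable {M : Type*} [Monoid M] [DecidableEq M] {S : Finset M} {p : M}

lemma union_image_mul_right_mul_mem (hS : ∀ g ∈ S, ∀ h ∈ S, g * h ∈ S)
    (hpS : ∀ g ∈ S, Commute p g) (hp : p * p = 1) :
    ∀ g ∈ S ∪ S.image (· * p), ∀ h ∈ S ∪ S.image (· * p), g * h ∈ S ∪ S.image (· * p) := by
  intro g hg h hh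
  simp only [Finset.mem_union, Finset.mem_image] at hg hh ⊢
  rcases hg with hg | ⟨g, hg, rfl⟩ <;> rcases hh with hh | ⟨h, hh, rfl⟩
  · exact .inl (hS g hg h hh)
  · exact .inr ⟨g * h, hS g hg h hh, mul_assoc _ _ _⟩
  · exact .inr ⟨g * h, hS g hg h hh, by rw [mul_assoc, mul_assoc, hpS h hh]⟩
  · left
    rw [mul_assoc, ← mul_assoc p, hpS h hh, mul_assoc, hp, mul_one]
    exact hS g hg h hh

lemma union_image_mul_right_commute (hS : ∀ g ∈ S, ∀ h ∈ S, Commute g h)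
    (hpS : ∀ g ∈ S, Commute p g) :
    ∀ g ∈ S ∪ S.image (· * p), ∀ h ∈ S ∪ S.image (· * p), Commute g h := by
  simp only [Finset.forall_mem_union, Finset.forall_mem_image]
  exact ⟨fun g hg => ⟨fun h hh => hS g hg h hh,
      fun h hh => (hS g hg h hh).mul_right (hpS g hg).symm⟩,
    fun g hg => ⟨fun h hh => (hS g hg h hh).mul_left (hpS h hh),
      fun h hh => ((hS g hg h hh).mul_left (hpS h hh)).mul_right
        ((hpS g hg).symm.mul_left (Commute.refl p))⟩⟩

lemma disjoint_image_mul_right (hS : ∀ g ∈ S, ∀ h ∈ S, g * h ∈ S)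
    (hinv : ∀ g ∈ S, g * g = 1) (hp : p ∉ S) : Disjoint S (S.image (· * p)) := by
  refine Finset.disjoint_right.mpr ?_
  simp only [Finset.forall_mem_image]
  intro g hg hgp
  have hpS := hS g hg _ hgp
  rw [← mul_assoc, hinv g hg, one_mul] at hpS
  exact hp hpS

lemma card_union_image_mul_right (hdisj : Disjoint S (S.image (· * p))) (hp : p * p = 1) :
    (S ∪ S.image (· * p)).card = 2 * S.card := by
  rw [Finset.card_union_of_disjoint hdisj,
    Finset.card_image_of_injective _ (isUnit_of_mul_self_eq_one hp).mul_left_injective, two_mul]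

end AdjoinInvolution

lemma sum_union_image_mul_right {R : Type*} [Semiring R] [DecidableEq R] {S : Finset R} {p : R}
    (hdisj : Disjoint S (S.image (· * p))) (hp : p * p = 1) :
    ∑ g ∈ S ∪ S.image (· * p), g = (∑ g ∈ S, g) * (1 + p) := by
  rw [Finset.sum_union hdisj,
    Finset.sum_image fun _ _ _ _ h => (isUnit_of_mul_self_eq_one hp).mul_left_injective h,
    mul_add, mul_one, Finset.sum_mul]

lemma stabProj_union_image_mul_right {n : ℕ} {S : Finset (Matrix (V n) (V n) ℂ)}
    {p : Matrix (V n) (V n) ℂ} (hdisj : Disjoint S (S.image (· * p))) (hp : p * p = 1) :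
    stabProj (S ∪ S.image (· * p)) = stabProj S * ((2 : ℂ)⁻¹ • (1 + p)) := by
  rw [stabProj, stabProj, sum_union_image_mul_right hdisj hp, card_union_image_mul_right hdisj hp,
    Matrix.smul_mul, Matrix.mul_smul, smul_smul, Nat.cast_mul, Nat.cast_ofNat, mul_inv, mul_comm]

lemma isSign_of_mul_self_eq_one {s : ℂ} (h : s * s = 1) : IsSign s :=
  mul_self_eq_one_iff.mp h

lemma IsSign.mul_self {s : ℂ} (h : IsSign s) : s * s = 1 :=
  mul_self_eq_one_iff.mpr h

lemma IsSign.ne_zero {s : ℂ} (h : IsSign s) : s ≠ 0 :=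
  left_ne_zero_of_mul_eq_one h.mul_self

lemma IsSign.mul {s t : ℂ} (hs : IsSign s) (ht : IsSign t) : IsSign (s * t) :=
  isSign_of_mul_self_eq_one (by rw [mul_mul_mul_comm, hs.mul_self, ht.mul_self, one_mul])

lemma neg_one_pow_eq_of_cast_eq {R : Type*} [Ring R] {m k : ℕ}
    (h : (m : ZMod 2) = k) : (-1 : R) ^ m = (-1) ^ k := by
  rw [neg_one_pow_eq_pow_mod_two, neg_one_pow_eq_pow_mod_two (n := k),
    (ZMod.natCast_eq_natCast_iff' _ _ _).mp h]

lemma binInner_add_left {ι : Type*} [Fintype ι] (x y v : ι → ZMod 2) :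
    binInner (x + y) v = binInner x v + binInner y v := by
  simp [binInner, add_mul, Finset.sum_add_distrib]

lemma binInner_add_right {ι : Type*} [Fintype ι] (v x y : ι → ZMod 2) :
    binInner v (x + y) = binInner v x + binInner v y := by
  simp [binInner, mul_add, Finset.sum_add_distrib]

section Pauli

variable {n : ℕ}

/-- The exponents in `PauliE`: `∑ⱼ xⱼ yⱼ` summed in `ℕ`; as an exponent of `i` it matters mod 4,
so it is not the same as `binInner x y`. -/
def natDot (x y : V n) : ℕ := ∑ j, (x j).val * (y j).val

lemma natDot_comm (x y : V n) : natDot x y = natDot y x := by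
  simp only [natDot, mul_comm]

lemma natDot_cast (x y : V n) : (natDot x y : ZMod 2) = binInner x y := by
  simp [natDot, binInner]

lemma neg_one_pow_natDot_add_left (x y v : V n) :
    (-1 : ℂ) ^ natDot (x + y) v = (-1) ^ natDot x v * (-1) ^ natDot y v := by
  rw [← pow_add]
  apply neg_one_pow_eq_of_cast_eq
  rw [Nat.cast_add, natDot_cast, natDot_cast, natDot_cast, binInner_add_left]

lemma neg_one_pow_natDot_add_right (v x y : V n) :
    (-1 : ℂ) ^ natDot v (x + y) = (-1) ^ natDot v x * (-1) ^ natDot v y := by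
  rw [natDot_comm, neg_one_pow_natDot_add_left, natDot_comm x, natDot_comm y]

lemma PauliE_apply (a b u v : V n) :
    PauliE a b u v =
      Complex.I ^ natDot a b * (if u = v + a then 1 else 0) * (-1) ^ natDot b v :=
  rfl

lemma PauliE_zero_left (z : V n) : PauliE 0 z = Matrix.diagonal fun v => (-1) ^ natDot z v := by
  ext u v
  by_cases h : u = v <;> simp [PauliE_apply, natDot, h]

lemma PauliE_mul_self (a b : V n) : PauliE a b * PauliE a b = 1 := by
  ext u v
  rw [Matrix.mul_apply, Finset.sum_eq_single (v + a)
    (fun w _ hw => by simp [PauliE_apply, hw]) (by simp)]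
  have hvaa : v + a + a = v := by ext j; simp [add_assoc, CharTwo.add_self_eq_zero]
  by_cases h : u = v
  · subst h
    have hI : Complex.I ^ natDot a b * Complex.I ^ natDot a b = (-1) ^ natDot b a := by
      rw [← pow_add, ← two_mul, pow_mul, Complex.I_sq, natDot_comm]
    have hsq (k : ℕ) : (-1 : ℂ) ^ k * (-1) ^ k = 1 := by
      rw [← mul_pow, neg_one_mul, neg_neg, one_pow]
    simp only [PauliE_apply, hvaa, if_true, mul_one, Matrix.one_apply_eq]
    rw [neg_one_pow_natDot_add_right]
    calc _ = Complex.I ^ natDot a b * Complex.I ^ natDot a b * (-1) ^ natDot b a *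
          ((-1) ^ natDot b u * (-1) ^ natDot b u) := by ring
      _ = 1 := by rw [hI, hsq, hsq, one_mul]
  · simp [PauliE_apply, hvaa, h, Matrix.one_apply_ne h]

lemma PauliE_zero_mul_PauliE (z a b : V n) :
    PauliE 0 z * PauliE a b = (-1 : ℂ) ^ natDot z a • (PauliE a b * PauliE 0 z) := by
  ext u v
  simp only [PauliE_zero_left, Matrix.diagonal_mul, Matrix.smul_apply, Matrix.mul_diagonal,
    PauliE_apply]
  split_ifs with h
  · rw [h, neg_one_pow_natDot_add_right]
    ring
  · simp

lemma binInner_eq_zero_of_commute {z a b : V n} (h : Commute (PauliE 0 z) (PauliE a b)) :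
    binInner a z = 0 := by
  have hne : PauliE a b * PauliE 0 z ≠ 0 := fun h0 => by
    have h1 : PauliE a b * (PauliE a b * PauliE 0 z) * PauliE 0 z = 1 := by
      rw [← mul_assoc, PauliE_mul_self, one_mul, PauliE_mul_self]
    rw [h0, mul_zero, zero_mul] at h1
    exact zero_ne_one h1
  have hsmul : ((-1 : ℂ) ^ natDot z a - 1) • (PauliE a b * PauliE 0 z) = 0 := by
    rw [sub_smul, one_smul, sub_eq_zero, ← PauliE_zero_mul_PauliE, h.eq]
  have hsign : (-1 : ℂ) ^ natDot z a = 1 :=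
    sub_eq_zero.mp ((smul_eq_zero.mp hsmul).resolve_right hne)
  rw [← natDot_cast, natDot_comm, ZMod.natCast_eq_zero_iff_even]
  exact (neg_one_pow_eq_one_iff_even (by norm_num)).mp hsign

lemma exists_isSign_PauliE_mul_PauliE_zero {a z : V n} (b : V n) (h : binInner a z = 0) :
    ∃ s, IsSign s ∧ PauliE a b * PauliE 0 z = s • PauliE a (b + z) := by
  have hIB : Complex.I ^ natDot a (b + z) ≠ 0 := pow_ne_zero _ Complex.I_ne_zero
  refine ⟨Complex.I ^ natDot a b / Complex.I ^ natDot a (b + z),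
    isSign_of_mul_self_eq_one ?_, ?_⟩
  · have hpar : (-1 : ℂ) ^ natDot a b = (-1) ^ natDot a (b + z) := neg_one_pow_eq_of_cast_eq
      (by rw [natDot_cast, natDot_cast, binInner_add_right, h, add_zero])
    rw [div_mul_div_comm, ← pow_add, ← pow_add, ← two_mul, ← two_mul, pow_mul, pow_mul,
      Complex.I_sq, hpar, div_self (pow_ne_zero _ (by norm_num))]
  · ext u v
    rw [PauliE_zero_left, Matrix.mul_diagonal, Matrix.smul_apply, PauliE_apply, PauliE_apply,
      neg_one_pow_natDot_add_left, smul_eq_mul]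
    field_simp

lemma commute_PauliE_zero_diagonal (z : V n) (d : V n → ℂ) :
    Commute (PauliE 0 z) (Matrix.diagonal d) := by
  rw [PauliE_zero_left]
  exact Matrix.commute_diagonal _ _

def IsSignedPauli (g : Matrix (V n) (V n) ℂ) : Prop :=
  ∃ (ε : ℂ) (a b : V n), IsSign ε ∧ g = ε • PauliE a b

lemma IsSignedPauli.mul_self_eq_one {g : Matrix (V n) (V n) ℂ} (hg : IsSignedPauli g) :
    g * g = 1 := by
  obtain ⟨ε, a, b, hε, rfl⟩ := hg
  rw [smul_mul_smul_comm, hε.mul_self, PauliE_mul_self, one_smul]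

lemma IsSignedPauli.mul_of_commute {g : Matrix (V n) (V n) ℂ} {ε : ℂ} {z : V n}
    (hg : IsSignedPauli g) (hε : IsSign ε) (hc : Commute (ε • PauliE 0 z) g) :
    IsSignedPauli (g * (ε • PauliE 0 z)) := by
  obtain ⟨ε₁, a, b, hε₁, rfl⟩ := hg
  have hc' : Commute (PauliE 0 z) (PauliE a b) :=
    (Commute.smul_right_iff₀ hε₁.ne_zero).mp ((Commute.smul_left_iff₀ hε.ne_zero).mp hc)
  obtain ⟨s, hs, hmul⟩ := exists_isSign_PauliE_mul_PauliE_zero b (binInner_eq_zero_of_commute hc')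
  exact ⟨ε₁ * ε * s, a, b + z, (hε₁.mul hε).mul hs,
    by rw [smul_mul_smul_comm, hmul, smul_smul]⟩

end Pauli

/-- Let `S` be a stabilizer group (with `2^r` elements) whose code space
is preserved by transversal `T`. If `ε E(0,z)` commutes with every element of `S`, is not
in `S`, and adjoining it does not introduce `−I`, then the group
`S' = S ∪ S·(εE(0,z))` generated by `S` and `εE(0,z)` is a stabilizer group with `2^{r+1}`
elements, `Π_{S'} = Π_S (I + εE(0,z))/2`, and transversal `T` still preserves `S'`. -/
theorem adjoin_Z_type_preserves_transversal_T (n r : ℕ)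
    (S : Finset (Matrix (V n) (V n) ℂ))
    (hS : IsStabilizer n S) (hcard : S.card = 2 ^ r)
    (hT : transT n * stabProj S * (transT n)ᴴ = stabProj S)
    (z : V n) (ε : ℂ) (hε : IsSign ε)
    (hcomm : ∀ g ∈ S, (ε • PauliE 0 z) * g = g * (ε • PauliE 0 z))
    (hnotin : ε • PauliE (0 : V n) z ∉ S)
    (hnoI : (-1 : Matrix (V n) (V n) ℂ) ∉
        S ∪ S.image (fun g => g * (ε • PauliE 0 z))) :
    IsStabilizer n (S ∪ S.image (fun g => g * (ε • PauliE 0 z))) ∧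
    (S ∪ S.image (fun g => g * (ε • PauliE 0 z))).card = 2 ^ (r + 1) ∧
    stabProj (S ∪ S.image (fun g => g * (ε • PauliE 0 z))) =
      stabProj S * ((2 : ℂ)⁻¹ • (1 + ε • PauliE 0 z)) ∧
    transT n * stabProj (S ∪ S.image (fun g => g * (ε • PauliE 0 z))) * (transT n)ᴴ =
      stabProj (S ∪ S.image (fun g => g * (ε • PauliE 0 z))) := by
  obtain ⟨hne, hform, hmul, hcommS, -⟩ := hS
  set P := ε • PauliE (0 : V n) z
  have hP : P * P = 1 := IsSignedPauli.mul_self_eq_one ⟨ε, 0, z, hε, rfl⟩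
  have hdisj : Disjoint S (S.image (· * P)) :=
    disjoint_image_mul_right hmul (fun g hg => IsSignedPauli.mul_self_eq_one (hform g hg)) hnotin
  have hproj := stabProj_union_image_mul_right hdisj hP
  have hPT : Commute ((2 : ℂ)⁻¹ • (1 + P)) (transT n)ᴴ := by
    rw [transT, Matrix.diagonal_conjTranspose]
    exact ((Commute.one_left _).add_left
      ((commute_PauliE_zero_diagonal z _).smul_left ε)).smul_left _
  refine ⟨⟨hne.mono Finset.subset_union_left, ?_, union_image_mul_right_mul_mem hmul hcomm hP,
      union_image_mul_right_commute hcommS hcomm, hnoI⟩, ?_, hproj, ?_⟩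
  · simp only [Finset.forall_mem_union, Finset.forall_mem_image]
    exact ⟨hform, fun g hg => IsSignedPauli.mul_of_commute (hform g hg) hε (hcomm g hg)⟩
  · rw [card_union_image_mul_right hdisj hP, hcard, pow_succ, mul_comm]
  · rw [hproj, ← mul_assoc, mul_assoc _ _ (transT n)ᴴ, hPT.eq, ← mul_assoc, hT]
end
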